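/- Monotonicity of Sort-Cut revenue in reported values: let w and w' be two profiles of reported values, each sorted in nonincreasing order, with the same budgets b_1, …, b_n attached to the corresponding indices, and suppose w'_i ≥ w_i for every i. Then for every breakpoint x, the Sort-Cut demand satisfies D_{w'}(x) ≤ D_{w}(x); consequently, the least clearing breakpoint for w' is at least the least clearing breakpoint for w, i.e., the revenue of the Sort-Cut mechanism is nondecreasing in the reported values. -/

import Mathlib

open Finset

/-- Prefix sum of budgets: `prefixSum b j = b 1 + ⋯ + b j`. -/
noncomputable def prefixSum (b : ℕ → ℝ) (j : ℕ) : ℝ := ∑ i ∈ Finset.Icc 1 j, b i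

open scoped Classical in
/-- The cut index determined by a breakpoint `x`: the largest `k ∈ {1, …, n}` with
`b 1 + ⋯ + b (k-1) ≤ x`. -/
noncomputable def cutIndex (b : ℕ → ℝ) (n : ℕ) (x : ℝ) : ℕ :=
  Nat.findGreatest (fun k => 1 ≤ k ∧ prefixSum b (k - 1) ≤ x) n

/-- `qty w b n x t` is the number of units obtained by spending `t` dollars along the
Sort-Cut price schedule at breakpoint `x`: the first `b'_k = prefixSum b k - x` dollars buy
units at unit price `w k`, the next `b (k+1)` dollars at price `w (k+1)`, and so on through
`w n` (spending is capped at the total money the schedule accommodates).  The cumulative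
money available through segment `j` is `max (prefixSum b j - x) 0`. -/
noncomputable def qty (w b : ℕ → ℝ) (n : ℕ) (x t : ℝ) : ℝ :=
  ∑ j ∈ Finset.Icc 1 n,
    (min t (max (prefixSum b j - x) 0) - min t (max (prefixSum b (j - 1) - x) 0)) / w j

/-- The Sort-Cut demand at breakpoint `x`: each bidder `i < k` demands `qty (b i)`, and
bidder `k` demands `q' (b k - b'_k) = qty (b k) - qty (b'_k)` along the schedule with its
first segment removed. -/
noncomputable def demand (w b : ℕ → ℝ) (n : ℕ) (x : ℝ) : ℝ :=
  (∑ i ∈ Finset.Icc 1 (cutIndex b n x - 1), qty w b n x (b i)) +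
    (qty w b n x (b (cutIndex b n x)) - qty w b n x (prefixSum b (cutIndex b n x) - x))

/-- The quantity allocated to bidder `i` by the Sort-Cut mechanism at breakpoint `x`. -/
noncomputable def alloc (w b : ℕ → ℝ) (n : ℕ) (x : ℝ) (i : ℕ) : ℝ :=
  if i < cutIndex b n x then qty w b n x (b i)
  else if i = cutIndex b n x then
    qty w b n x (b i) - qty w b n x (prefixSum b (cutIndex b n x) - x)
  else 0

/-- The payment charged to bidder `i` by the Sort-Cut mechanism at breakpoint `x`:
bidders below the cut pay their whole budget, bidder `k` pays `b k - b'_k`, the rest pay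
nothing. -/
noncomputable def pay (b : ℕ → ℝ) (n : ℕ) (x : ℝ) (i : ℕ) : ℝ :=
  if i < cutIndex b n x then b i
  else if i = cutIndex b n x then b i - (prefixSum b (cutIndex b n x) - x)
  else 0

/-- A valid reported profile: at least one bidder, a positive supply `m`, positive reported
values and budgets, values sorted in nonincreasing order, and the lowest bidder can buy all
`m` units at her reported value. -/
def ValidProfile (w b : ℕ → ℝ) (n : ℕ) (m : ℝ) : Prop :=
  1 ≤ n ∧ 0 < m ∧
    (∀ i ∈ Finset.Icc 1 n, 0 < w i ∧ 0 < b i) ∧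
    (∀ i ∈ Finset.Icc 1 n, ∀ j ∈ Finset.Icc 1 n, i ≤ j → w j ≤ w i) ∧
    m * w n ≤ b n

/-- `x` is a clearing breakpoint of the Sort-Cut mechanism: demand equals supply. -/
def IsClearing (w b : ℕ → ℝ) (n : ℕ) (m x : ℝ) : Prop :=
  0 ≤ x ∧ x ≤ prefixSum b n ∧ demand w b n x = m

section Aux

open Finset

lemma prefixSum_eq_Ioc (b : ℕ → ℝ) (j : ℕ) : prefixSum b j = ∑ i ∈ Finset.Ioc 0 j, b i := by
  rw [prefixSum, ← Finset.Icc_add_one_left_eq_Ioc, zero_add]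

lemma prefixSum_zero (b : ℕ → ℝ) : prefixSum b 0 = 0 := by
  simp [prefixSum]

lemma prefixSum_succ (b : ℕ → ℝ) (k : ℕ) : prefixSum b (k + 1) = prefixSum b k + b (k + 1) := by
  rw [prefixSum_eq_Ioc, prefixSum_eq_Ioc, Finset.sum_Ioc_succ_top (Nat.zero_le _)]

lemma prefixSum_mono {b : ℕ → ℝ} {n : ℕ} (hb : ∀ i ∈ Finset.Icc 1 n, 0 < b i)
    {i j : ℕ} (hij : i ≤ j) (hj : j ≤ n) : prefixSum b i ≤ prefixSum b j := by
  rw [prefixSum_eq_Ioc, prefixSum_eq_Ioc, ← Finset.sum_Ioc_consecutive b (Nat.zero_le i) hij]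
  have : 0 ≤ ∑ l ∈ Finset.Ioc i j, b l := by
    apply Finset.sum_nonneg
    intro l hl
    rw [Finset.mem_Ioc] at hl
    exact (hb l (Finset.mem_Icc.mpr ⟨by omega, by omega⟩)).le
  linarith

lemma prefixSum_nonneg {b : ℕ → ℝ} {n : ℕ} (hb : ∀ i ∈ Finset.Icc 1 n, 0 < b i)
    {j : ℕ} (hj : j ≤ n) : 0 ≤ prefixSum b j := by
  have := prefixSum_mono hb (Nat.zero_le j) hj
  rwa [prefixSum_zero b] at this

/-- spending 0 buys 0 units. -/
lemma qty_zero (w b : ℕ → ℝ) (n : ℕ) (x : ℝ) : qty w b n x 0 = 0 := by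
  unfold qty
  apply Finset.sum_eq_zero
  intro j _
  rw [min_eq_left (le_max_right _ _), min_eq_left (le_max_right _ _), sub_self, zero_div]

lemma min_sub_min_mono {c t A A' : ℝ} (hct : c ≤ t) (hAA : A ≤ A') :
    min t A - min c A ≤ min t A' - min c A' := by
  rcases le_total t A with h1 | h1 <;> rcases le_total t A' with h2 | h2 <;>
    rcases le_total c A with h3 | h3 <;> rcases le_total c A' with h4 | h4 <;>
    simp [min_def] <;> split_ifs <;> linarith

/-- Key monotonicity: raising values lowers the extra units bought between `c` and `t` dollars. -/
lemma qty_diff_le {w w' : ℕ → ℝ} (b : ℕ → ℝ) {n : ℕ} (x : ℝ)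
    (hw : ∀ j ∈ Finset.Icc 1 n, 0 < w j) (hww : ∀ j ∈ Finset.Icc 1 n, w j ≤ w' j)
    (hb : ∀ i ∈ Finset.Icc 1 n, 0 < b i)
    {c t : ℝ} (hct : c ≤ t) :
    qty w' b n x t - qty w' b n x c ≤ qty w b n x t - qty w b n x c := by
  unfold qty
  rw [← Finset.sum_sub_distrib, ← Finset.sum_sub_distrib]
  apply Finset.sum_le_sum
  intro j hj
  rw [div_sub_div_same, div_sub_div_same]
  set A : ℝ := max (prefixSum b j - x) 0
  set A' : ℝ := max (prefixSum b (j - 1) - x) 0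
  have hmem := Finset.mem_Icc.mp hj
  have hAA : A' ≤ A := by
    apply max_le_max _ le_rfl
    have : prefixSum b (j - 1) ≤ prefixSum b j := prefixSum_mono hb (by omega) hmem.2
    linarith
  have hnum : 0 ≤ min t A - min t A' - (min c A - min c A') := by
    have := min_sub_min_mono hct hAA
    linarith
  have h1 : min t A - min t A' - (min c A - min c A') =
      min t A - min c A - (min t A' - min c A') := by ring
  exact div_le_div_of_nonneg_left hnum (hw j hj) (hww j hj)

/-- The clamp of the amount of schedule money below the end of bidder `i`'s segment. -/
noncomputable def clampAmt (b : ℕ → ℝ) (i : ℕ) (x : ℝ) : ℝ :=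
  min (b i) (max (prefixSum b i - x) 0)

/-- The cut-index-free expression for demand. -/
noncomputable def demandAlt (w b : ℕ → ℝ) (n : ℕ) (x : ℝ) : ℝ :=
  ∑ i ∈ Finset.Icc 1 n, (qty w b n x (b i) - qty w b n x (clampAmt b i x))

open scoped Classical in
lemma cutIndex_spec {b : ℕ → ℝ} {n : ℕ} {x : ℝ} (hn : 1 ≤ n) (hx0 : 0 ≤ x)
    (hxn : x ≤ prefixSum b n) :
    1 ≤ cutIndex b n x ∧ cutIndex b n x ≤ n ∧
      prefixSum b (cutIndex b n x - 1) ≤ x ∧ x ≤ prefixSum b (cutIndex b n x) := by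
  have h1 : (fun k => 1 ≤ k ∧ prefixSum b (k - 1) ≤ x) 1 := by
    refine ⟨le_rfl, ?_⟩
    simpa [prefixSum_zero b] using hx0
  unfold cutIndex
  refine ⟨Nat.le_findGreatest hn h1, Nat.findGreatest_le n,
    (Nat.findGreatest_spec (P := fun k => 1 ≤ k ∧ prefixSum b (k - 1) ≤ x) hn h1).2, ?_⟩
  rcases eq_or_lt_of_le
      (Nat.findGreatest_le (P := fun k => 1 ≤ k ∧ prefixSum b (k - 1) ≤ x) n) with hkeq | hklt
  · rw [hkeq]; exact hxn
  · have hgt := Nat.findGreatest_is_greatest (Nat.lt_succ_self _) hklt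
    push_neg at hgt
    have h2 := hgt (by omega)
    simp only [Nat.succ_sub_one] at h2
    linarith

lemma demand_eq_alt {w b : ℕ → ℝ} {n : ℕ} (hn : 1 ≤ n)
    (hb : ∀ i ∈ Finset.Icc 1 n, 0 < b i) {x : ℝ} (hx0 : 0 ≤ x) (hxn : x ≤ prefixSum b n) :
    demand w b n x = demandAlt w b n x := by
  obtain ⟨hk1, hkn, hklo, hkhi⟩ := cutIndex_spec (b := b) hn hx0 hxn
  set k := cutIndex b n x with hk
  have hsplit : Finset.Icc 1 n = Finset.Icc 1 (k - 1) ∪ Finset.Icc k n := by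
    ext l
    simp only [Finset.mem_union, Finset.mem_Icc]
    omega
  have hdisj : Disjoint (Finset.Icc 1 (k - 1)) (Finset.Icc k n) := by
    rw [Finset.disjoint_left]
    intro l h1 h2
    rw [Finset.mem_Icc] at h1 h2
    omega
  have hsplit2 : Finset.Icc k n = insert k (Finset.Icc (k + 1) n) := by
    ext l
    simp only [Finset.mem_insert, Finset.mem_Icc]
    omega
  rw [demandAlt, hsplit, Finset.sum_union hdisj, hsplit2,
    Finset.sum_insert (by simp [Finset.mem_Icc])]
  have hlow : ∀ i ∈ Finset.Icc 1 (k - 1),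
      qty w b n x (b i) - qty w b n x (clampAmt b i x) = qty w b n x (b i) := by
    intro i hi
    rw [Finset.mem_Icc] at hi
    have hPi : prefixSum b i ≤ prefixSum b (k - 1) := prefixSum_mono hb (by omega) (by omega)
    have : clampAmt b i x = 0 := by
      rw [clampAmt, max_eq_right (by linarith), min_eq_right (hb i (Finset.mem_Icc.mpr ⟨by omega, by omega⟩)).le]
    rw [this, qty_zero, sub_zero]
  have hmid : clampAmt b k x = prefixSum b k - x := by
    have hPk : prefixSum b k = prefixSum b (k - 1) + b k := by
      have := prefixSum_succ b (k - 1)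
      rwa [Nat.sub_add_cancel hk1] at this
    rw [clampAmt, max_eq_left (by linarith), min_eq_right (by linarith)]
  have hhigh : ∀ i ∈ Finset.Icc (k + 1) n,
      qty w b n x (b i) - qty w b n x (clampAmt b i x) = 0 := by
    intro i hi
    rw [Finset.mem_Icc] at hi
    have hPk : prefixSum b k ≤ prefixSum b (i - 1) := prefixSum_mono hb (by omega) (by omega)
    have hPi : prefixSum b i = prefixSum b (i - 1) + b i := by
      have := prefixSum_succ b (i - 1)
      rwa [Nat.sub_add_cancel (by omega)] at this
    have hbi : 0 < b i := hb i (Finset.mem_Icc.mpr ⟨by omega, hi.2⟩)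
    have : clampAmt b i x = b i := by
      rw [clampAmt, max_eq_left (by linarith), min_eq_left (by linarith)]
    rw [this, sub_self]
  rw [Finset.sum_congr rfl hlow, Finset.sum_eq_zero hhigh, hmid, demand]
  ring

/-- demand at breakpoint `0` is `0`. -/
lemma demandAlt_zero {w b : ℕ → ℝ} {n : ℕ} (hb : ∀ i ∈ Finset.Icc 1 n, 0 < b i) :
    demandAlt w b n 0 = 0 := by
  apply Finset.sum_eq_zero
  intro i hi
  rw [Finset.mem_Icc] at hi
  have hPi : prefixSum b i = prefixSum b (i - 1) + b i := by
    have := prefixSum_succ b (i - 1)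
    rwa [Nat.sub_add_cancel hi.1] at this
  have hP0 : 0 ≤ prefixSum b (i - 1) := prefixSum_nonneg hb (by omega)
  have hbi : 0 < b i := hb i (Finset.mem_Icc.mpr hi)
  have : clampAmt b i 0 = b i := by
    rw [clampAmt, sub_zero, max_eq_left (by linarith), min_eq_left (by linarith)]
  rw [this, sub_self]

lemma qty_continuous (w b : ℕ → ℝ) (n : ℕ) :
    Continuous fun p : ℝ × ℝ => qty w b n p.1 p.2 := by
  unfold qty
  apply continuous_finset_sum
  intro j _
  apply Continuous.div_const
  apply Continuous.sub <;>
    exact continuous_snd.min ((continuous_const.sub continuous_fst).max continuous_const)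

lemma demandAlt_continuous (w b : ℕ → ℝ) (n : ℕ) : Continuous (demandAlt w b n) := by
  apply continuous_finset_sum
  intro i _
  apply Continuous.sub
  · exact (qty_continuous w b n).comp (continuous_id.prodMk continuous_const)
  · exact (qty_continuous w b n).comp (continuous_id.prodMk
      (continuous_const.min ((continuous_const.sub continuous_id).max continuous_const)))

lemma demandAlt_le {w w' b : ℕ → ℝ} {n : ℕ} (x : ℝ)
    (hw : ∀ j ∈ Finset.Icc 1 n, 0 < w j) (hww : ∀ j ∈ Finset.Icc 1 n, w j ≤ w' j)
    (hb : ∀ i ∈ Finset.Icc 1 n, 0 < b i) :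
    demandAlt w' b n x ≤ demandAlt w b n x := by
  apply Finset.sum_le_sum
  intro i _
  exact qty_diff_le b x hw hww hb (min_le_left _ _)

end Aux

/-- monotonicity of Sort-Cut revenue in the reported values.  If every
reported value weakly increases (budgets unchanged, both profiles sorted), then the demand
at every breakpoint weakly decreases, and consequently the least clearing breakpoint -
i.e. the revenue of the Sort-Cut mechanism - weakly increases. -/
theorem sortcut_revenue_monotone_in_values
    (n : ℕ) (m : ℝ) (w w' b : ℕ → ℝ)
    (hV : ValidProfile w b n m) (hV' : ValidProfile w' b n m)
    (hle : ∀ i ∈ Finset.Icc 1 n, w i ≤ w' i) :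
    (∀ x : ℝ, 0 ≤ x → x ≤ prefixSum b n → demand w' b n x ≤ demand w b n x) ∧
      ∀ x x' : ℝ,
        IsLeast {y : ℝ | IsClearing w b n m y} x →
        IsLeast {y : ℝ | IsClearing w' b n m y} x' →
        x ≤ x' := by
  obtain ⟨hn, hm, hwb, hsort, hlast⟩ := hV
  have hw : ∀ j ∈ Finset.Icc 1 n, 0 < w j := fun j hj => (hwb j hj).1
  have hb : ∀ i ∈ Finset.Icc 1 n, 0 < b i := fun i hi => (hwb i hi).2
  have part1 : ∀ x : ℝ, 0 ≤ x → x ≤ prefixSum b n → demand w' b n x ≤ demand w b n x := by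
    intro x hx0 hxn
    rw [demand_eq_alt hn hb hx0 hxn, demand_eq_alt hn hb hx0 hxn]
    exact demandAlt_le x hw hle hb
  refine ⟨part1, ?_⟩
  intro x x' hx hx'
  obtain ⟨⟨hx'0, hx'n, hx'D⟩, _⟩ := hx'
  have hDx' : m ≤ demandAlt w b n x' := by
    have h1 := part1 x' hx'0 hx'n
    rw [hx'D] at h1
    rwa [demand_eq_alt hn hb hx'0 hx'n] at h1
  have h0 : demandAlt w b n 0 = 0 := demandAlt_zero hb
  have hIVT := intermediate_value_Icc hx'0 (demandAlt_continuous w b n).continuousOn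
  have hmem : m ∈ Set.Icc (demandAlt w b n 0) (demandAlt w b n x') := by
    rw [h0]
    exact ⟨hm.le, hDx'⟩
  obtain ⟨y, hy, hyD⟩ := hIVT hmem
  have hy0 : 0 ≤ y := hy.1
  have hyx' : y ≤ x' := hy.2
  have hyn : y ≤ prefixSum b n := le_trans hyx' hx'n
  have hyC : IsClearing w b n m y :=
    ⟨hy0, hyn, by rw [demand_eq_alt hn hb hy0 hyn]; exact hyD⟩
  exact le_trans (hx.2 hyC) hyx'
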